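/- For all real numbers x > 0 and y > 0, one has x·y·|log(x/y)| ≤ (x² + y²)/e. -/
import Mathlib

lemma kp_aux (x y : ℝ) (hx : 0 < x) (hy : 0 < y) :
    x * y * Real.log (x / y) ≤ x ^ 2 / Real.exp 1 := by
  have he : (0:ℝ) < Real.exp 1 := Real.exp_pos 1
  have h := Real.log_le_sub_one_of_pos (show 0 < x / (y * Real.exp 1) by positivity)
  have hrw : Real.log (x / (y * Real.exp 1)) = Real.log (x / y) - 1 := by
    rw [Real.log_div hx.ne' (by positivity), Real.log_mul hy.ne' he.ne',
      Real.log_exp, Real.log_div hx.ne' hy.ne']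
    ring
  rw [hrw] at h
  have h2 : Real.log (x / y) ≤ x / (y * Real.exp 1) := by linarith
  have h3 : x * y * Real.log (x / y) ≤ x * y * (x / (y * Real.exp 1)) := by
    apply mul_le_mul_of_nonneg_left h2 (by positivity)
  have h4 : x * y * (x / (y * Real.exp 1)) = x ^ 2 / Real.exp 1 := by
    field_simp
  linarith

/-- **Kalton–Peck inequality**: for all positive reals `x, y`,
`x·y·|log(x/y)| ≤ (x² + y²)/e`. -/
theorem kalton_peck_inequality (x y : ℝ) (hx : 0 < x) (hy : 0 < y) :
    x * y * |Real.log (x / y)| ≤ (x ^ 2 + y ^ 2) / Real.exp 1 := by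
  have he : (0:ℝ) < Real.exp 1 := Real.exp_pos 1
  have hx2 : (0:ℝ) ≤ x ^ 2 / Real.exp 1 := by positivity
  have hy2 : (0:ℝ) ≤ y ^ 2 / Real.exp 1 := by positivity
  have hsum : (x ^ 2 + y ^ 2) / Real.exp 1 = x ^ 2 / Real.exp 1 + y ^ 2 / Real.exp 1 := by ring
  rcases abs_cases (Real.log (x / y)) with ⟨h, _⟩ | ⟨h, _⟩
  · rw [h, hsum]
    have := kp_aux x y hx hy
    linarith
  · rw [h, hsum]
    have hneg : -Real.log (x / y) = Real.log (y / x) := by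
      rw [Real.log_div hx.ne' hy.ne', Real.log_div hy.ne' hx.ne']; ring
    have := kp_aux y x hy hx
    nlinarith [this]
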